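/- arXiv:1607.00510 — 6 statements merged into one kernel-verified Lean document; each statement's English description precedes it below -/
import Mathlib

section
/- Let Ω ⊆ ℝ be a measurable set, N₀ > 0, and let H_SD, H_SR, H_RD : Ω → ℂ be measurable with H_SD(f) ≠ 0 and H_RD(f)·H_SR(f) ≠ 0 for every f ∈ Ω. For measurable functions P : Ω → [0,∞) and Ξ : Ω → ℂ, define the per-frequency rate R(P,Ξ)(f) = (1/2)·log₂(1 + |H_SD(f) + H_RD(f)H_SR(f)Ξ(f)|²·P(f) / ((|H_RD(f)Ξ(f)|² + 1)·N₀)). Define the phase-aligned function Ξ'(f) := |Ξ(f)| · (H_SD(f)·conj(H_RD(f)H_SR(f))) / |H_SD(f)·conj(H_RD(f)H_SR(f))|. Then Ξ' is measurable, |Ξ'(f)| = |Ξ(f)| for all f (so that ∫_Ω |Ξ'(f)|²(|H_SR(f)|²P(f) + N₀) df = ∫_Ω |Ξ(f)|²(|H_SR(f)|²P(f) + N₀) df), R(P,Ξ')(f) ≥ R(P,Ξ)(f) for every f ∈ Ω, and consequently ∫_Ω R(P,Ξ')(f) df ≥ ∫_Ω R(P,Ξ)(f) df. -/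
/-!
Write `d = H_SD`, `a = H_RD H_SR` and `x = Ξ`. The denominator of the rate depends on `Ξ` only
through `|Ξ|`, while the numerator is increasing in `|d + a x|`. By the triangle inequality
`|d + a x| ≤ |d| + |a| |x|`, with equality exactly when `a x` is a nonnegative multiple of `d`,
which is what the choice `arg x = arg (d * conj a)` achieves.
-/

open MeasureTheory

/-- The per-frequency achievable rate `R(P,Ξ)(f)` of equation (10)/(13). -/
noncomputable def ffRate (N₀ : ℝ) (HSD HSR HRD : ℝ → ℂ) (P : ℝ → ℝ) (Ξ : ℝ → ℂ)
    (f : ℝ) : ℝ :=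
  (1 / 2) * Real.logb 2 (1 +
    (‖HSD f + HRD f * HSR f * Ξ f‖) ^ 2 * P f /
      (((‖HRD f * Ξ f‖) ^ 2 + 1) * N₀))

noncomputable def withArgOf (x c : ℂ) : ℂ := (‖x‖ : ℂ) * c / (‖c‖ : ℂ)

theorem withArgOf_eq_ofReal_mul (x c : ℂ) : withArgOf x c = ((‖x‖ / ‖c‖ : ℝ) : ℂ) * c := by
  rw [withArgOf]
  push_cast
  ring

theorem norm_withArgOf (x : ℂ) {c : ℂ} (hc : c ≠ 0) : ‖withArgOf x c‖ = ‖x‖ := by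
  rw [withArgOf_eq_ofReal_mul, norm_mul, Complex.norm_real, Real.norm_of_nonneg (by positivity),
    div_mul_cancel₀ _ (norm_ne_zero_iff.mpr hc)]

theorem mul_withArgOf_mul_conj (d a x : ℂ) :
    a * withArgOf x (d * (starRingEnd ℂ) a) = ((‖x‖ * ‖a‖ / ‖d‖ : ℝ) : ℂ) * d := by
  rcases eq_or_ne a 0 with rfl | ha
  · simp
  rw [withArgOf_eq_ofReal_mul, norm_mul, Complex.norm_conj]
  calc a * (((‖x‖ / (‖d‖ * ‖a‖) : ℝ) : ℂ) * (d * (starRingEnd ℂ) a))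
      = ((‖x‖ / (‖d‖ * ‖a‖) : ℝ) : ℂ) * (a * (starRingEnd ℂ) a) * d := by ring
    _ = ((‖x‖ * ‖a‖ / ‖d‖ : ℝ) : ℂ) * d := by
      rw [Complex.mul_conj']
      congr 1
      have : ‖a‖ ≠ 0 := norm_ne_zero_iff.mpr ha
      push_cast
      field_simp

theorem norm_add_mul_withArgOf {d : ℂ} (hd : d ≠ 0) (a x : ℂ) :
    ‖d + a * withArgOf x (d * (starRingEnd ℂ) a)‖ = ‖d‖ + ‖a‖ * ‖x‖ := by
  have hd' : ‖d‖ ≠ 0 := norm_ne_zero_iff.mpr hd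
  rw [mul_withArgOf_mul_conj, ← one_add_mul, ← Complex.ofReal_one, ← Complex.ofReal_add,
    norm_mul, Complex.norm_real, Real.norm_of_nonneg (by positivity), add_mul, one_mul,
    div_mul_cancel₀ _ hd', mul_comm ‖x‖]

theorem norm_add_mul_le_norm_add_mul_withArgOf {d : ℂ} (hd : d ≠ 0) (a x : ℂ) :
    ‖d + a * x‖ ≤ ‖d + a * withArgOf x (d * (starRingEnd ℂ) a)‖ := by
  rw [norm_add_mul_withArgOf hd, ← norm_mul]
  exact norm_add_le d (a * x)

theorem ffRate_le_ffRate {N₀ : ℝ} (hN₀ : 0 ≤ N₀) {HSD HSR HRD : ℝ → ℂ} {P : ℝ → ℝ}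
    {Ξ₁ Ξ₂ : ℝ → ℂ} {f : ℝ} (hP : 0 ≤ P f) (hnorm : ‖Ξ₂ f‖ = ‖Ξ₁ f‖)
    (hgain : ‖HSD f + HRD f * HSR f * Ξ₁ f‖ ≤ ‖HSD f + HRD f * HSR f * Ξ₂ f‖) :
    ffRate N₀ HSD HSR HRD P Ξ₁ f ≤ ffRate N₀ HSD HSR HRD P Ξ₂ f := by
  unfold ffRate
  rw [norm_mul (HRD f) (Ξ₂ f), hnorm, ← norm_mul]
  gcongr
  norm_num

theorem phase_alignment_improves_rate_general
    (Ω : Set ℝ) (hΩ : MeasurableSet Ω) (N₀ : ℝ) (hN₀ : 0 < N₀)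
    (HSD HSR HRD : ℝ → ℂ)
    (hSDm : Measurable HSD) (hSRm : Measurable HSR) (hRDm : Measurable HRD)
    (hSD0 : ∀ f ∈ Ω, HSD f ≠ 0) (hRDSR0 : ∀ f ∈ Ω, HRD f * HSR f ≠ 0)
    (P : ℝ → ℝ) (hP0 : ∀ f, 0 ≤ P f)
    (Ξ : ℝ → ℂ) (hΞm : Measurable Ξ) :
    let Ξ' : ℝ → ℂ := fun f =>
      (‖Ξ f‖ : ℂ) * (HSD f * (starRingEnd ℂ) (HRD f * HSR f))
        / (‖HSD f * (starRingEnd ℂ) (HRD f * HSR f)‖ : ℂ)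
    Measurable Ξ' ∧
    (∀ f ∈ Ω, ‖Ξ' f‖ = ‖Ξ f‖) ∧
    (∫⁻ f in Ω, ENNReal.ofReal
        ((‖Ξ' f‖) ^ 2 * ((‖HSR f‖) ^ 2 * P f + N₀))
      = ∫⁻ f in Ω, ENNReal.ofReal
        ((‖Ξ f‖) ^ 2 * ((‖HSR f‖) ^ 2 * P f + N₀))) ∧
    (∀ f ∈ Ω, ffRate N₀ HSD HSR HRD P Ξ f ≤ ffRate N₀ HSD HSR HRD P Ξ' f) ∧
    (∫⁻ f in Ω, ENNReal.ofReal (ffRate N₀ HSD HSR HRD P Ξ f)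
      ≤ ∫⁻ f in Ω, ENNReal.ofReal (ffRate N₀ HSD HSR HRD P Ξ' f)) := by
  intro Ξ'
  have hnorm : ∀ f ∈ Ω, ‖Ξ' f‖ = ‖Ξ f‖ := fun f hf =>
    norm_withArgOf (Ξ f) (mul_ne_zero (hSD0 f hf) ((map_ne_zero _).mpr (hRDSR0 f hf)))
  have hrate : ∀ f ∈ Ω, ffRate N₀ HSD HSR HRD P Ξ f ≤ ffRate N₀ HSD HSR HRD P Ξ' f :=
    fun f hf => ffRate_le_ffRate hN₀.le (hP0 f) (hnorm f hf)
      (norm_add_mul_le_norm_add_mul_withArgOf (hSD0 f hf) _ _)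
  refine ⟨by fun_prop, hnorm, ?_, hrate, ?_⟩
  · exact setLIntegral_congr_fun hΩ fun f hf => by simp only [hnorm f hf]
  · exact setLIntegral_mono' hΩ fun f hf => ENNReal.ofReal_le_ofReal (hrate f hf)

/-- Reduction from problem (13) to problem (15): replacing a candidate effective
relay gain `Ξ` by its phase-aligned version `Ξ'` preserves measurability and the
per-frequency modulus (hence the relay power integral) while not decreasing the
rate integrand at any frequency of `Ω`, and therefore not decreasing the integrated
rate over `Ω`. -/
theorem phase_alignment_improves_rate
    (Ω : Set ℝ) (hΩ : MeasurableSet Ω) (N₀ : ℝ) (hN₀ : 0 < N₀)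
    (HSD HSR HRD : ℝ → ℂ)
    (hSDm : Measurable HSD) (hSRm : Measurable HSR) (hRDm : Measurable HRD)
    (hSD0 : ∀ f ∈ Ω, HSD f ≠ 0) (hRDSR0 : ∀ f ∈ Ω, HRD f * HSR f ≠ 0)
    (P : ℝ → ℝ) (hPm : Measurable P) (hP0 : ∀ f, 0 ≤ P f)
    (Ξ : ℝ → ℂ) (hΞm : Measurable Ξ) :
    let Ξ' : ℝ → ℂ := fun f =>
      (‖Ξ f‖ : ℂ) * (HSD f * (starRingEnd ℂ) (HRD f * HSR f))
        / (‖HSD f * (starRingEnd ℂ) (HRD f * HSR f)‖ : ℂ)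
    Measurable Ξ' ∧
    (∀ f ∈ Ω, ‖Ξ' f‖ = ‖Ξ f‖) ∧
    (∫⁻ f in Ω, ENNReal.ofReal
        ((‖Ξ' f‖) ^ 2 * ((‖HSR f‖) ^ 2 * P f + N₀))
      = ∫⁻ f in Ω, ENNReal.ofReal
        ((‖Ξ f‖) ^ 2 * ((‖HSR f‖) ^ 2 * P f + N₀))) ∧
    (∀ f ∈ Ω, ffRate N₀ HSD HSR HRD P Ξ f ≤ ffRate N₀ HSD HSR HRD P Ξ' f) ∧
    (∫⁻ f in Ω, ENNReal.ofReal (ffRate N₀ HSD HSR HRD P Ξ f)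
      ≤ ∫⁻ f in Ω, ENNReal.ofReal (ffRate N₀ HSD HSR HRD P Ξ' f)) :=
  phase_alignment_improves_rate_general Ω hΩ N₀ hN₀ HSD HSR HRD hSDm hSRm hRDm hSD0 hRDSR0 P hP0 Ξ
    hΞm
end

section
/- Let W > 0 and define v̄(β) = (1/(2W))·log₂(β/(2(ln 2)W)) − 1/(2(ln 2)W) + 1/β for β > 2(ln 2)W. Then v̄ is strictly increasing on the interval (2(ln 2)W, ∞) and v̄(β) > 0 for every β > 2(ln 2)W. -/
/-! With `c = 2 ln 2 · W` one has `(1/(2W)) log₂ x = ln x / c`, so `v̄(β) = (g(β/c) - 1)/c`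
for `g t = ln t + 1/t`. For `1 ≤ s < t`, `ln (t/s) > 1 - s/t ≥ 1/s - 1/t`, so `g` is strictly
increasing on `[1, ∞)`; both claims follow, positivity from `g 1 = 1`. -/

open Real Set

theorem strictMonoOn_log_add_inv : StrictMonoOn (fun t : ℝ => log t + t⁻¹) (Ici 1) := by
  intro s (hs : 1 ≤ s) t (ht : 1 ≤ t) hst
  have hs0 : 0 < s := one_pos.trans_le hs
  have ht0 : 0 < t := hs0.trans hst
  have hlog : log (s / t) < s / t - 1 :=
    log_lt_sub_one_of_pos (by positivity) (div_ne_one_of_ne hst.ne)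
  rw [log_div hs0.ne' ht0.ne'] at hlog
  have hinv : s⁻¹ - t⁻¹ ≤ 1 - s / t := by
    rw [inv_sub_inv hs0.ne' ht0.ne', div_le_iff₀ (by positivity)]
    field_simp
    nlinarith
  show log s + s⁻¹ < log t + t⁻¹
  linarith

theorem vbar_eq_log_add_inv {W β : ℝ} (hW : 0 < W) (hβ : 0 < β) :
    (1 / (2 * W)) * logb 2 (β / (2 * log 2 * W)) - 1 / (2 * log 2 * W) + 1 / β =
      (log (β / (2 * log 2 * W)) + (β / (2 * log 2 * W))⁻¹ - 1) / (2 * log 2 * W) := by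
  have hlog2 : 0 < log 2 := log_pos one_lt_two
  rw [logb]
  field_simp
  ring

/-- Monotonicity and positivity claim of equation (26) in Appendix B:
`v̄(β) = (1/(2W))·log₂(β/(2 ln 2 · W)) − 1/(2 ln 2 · W) + 1/β` is strictly
increasing and positive on `(2 ln 2 · W, ∞)`. -/
theorem vbar_strictMono_and_pos (W : ℝ) (hW : 0 < W) :
    let vbar : ℝ → ℝ := fun β =>
      (1 / (2 * W)) * Real.logb 2 (β / (2 * Real.log 2 * W))
        - 1 / (2 * Real.log 2 * W) + 1 / β
    StrictMonoOn vbar (Set.Ioi (2 * Real.log 2 * W)) ∧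
    (∀ β : ℝ, 2 * Real.log 2 * W < β → 0 < vbar β) := by
  intro vbar
  set c := 2 * log 2 * W
  have hc : 0 < c := by have := log_pos one_lt_two; positivity
  have hvbar : ∀ β, c < β → vbar β = (log (β / c) + (β / c)⁻¹ - 1) / c := fun β hβ =>
    vbar_eq_log_add_inv hW (hc.trans hβ)
  have hscale : ∀ β, c < β → β / c ∈ Ici 1 := fun β hβ =>
    (one_le_div hc).2 hβ.le
  refine ⟨fun a (ha : c < a) b (hb : c < b) hab => ?_, fun β hβ => ?_⟩
  · rw [hvbar a ha, hvbar b hb]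
    have hg := strictMonoOn_log_add_inv (hscale a ha) (hscale b hb)
      (div_lt_div_of_pos_right hab hc)
    gcongr
  · rw [hvbar β hβ]
    have hg := strictMonoOn_log_add_inv (mem_Ici.2 le_rfl) (hscale β hβ) ((one_lt_div hc).2 hβ)
    simp only [log_one, inv_one, zero_add] at hg
    apply div_pos _ hc
    linarith
end

section
/- Let W > 0 and define ψ(β) = max((1/(2W))·log₂(β/(2(ln 2)W)), 0) − max(1/(2(ln 2)W) − 1/β, 0) for β > 0. Then ψ is nondecreasing on (0,∞), ψ(β) = 0 for all 0 < β ≤ 2(ln 2)W, and ψ(β) > 0 for all β > 2(ln 2)W. -/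
/-- Combination of equations (24) and (26) of Appendix B: the optimal value
`ψ(β) = ((1/(2W))·log₂(β/(2 ln 2 · W)))⁺ − (1/(2 ln 2 · W) − 1/β)⁺` of the
per-frequency Lagrangian subproblem is nondecreasing on `(0,∞)`, vanishes for
`0 < β ≤ 2 ln 2 · W`, and is positive for `β > 2 ln 2 · W`. -/
theorem psi_monotone_zero_pos (W : ℝ) (hW : 0 < W) :
    let ψ : ℝ → ℝ := fun β =>
      max ((1 / (2 * W)) * Real.logb 2 (β / (2 * Real.log 2 * W))) 0
        - max (1 / (2 * Real.log 2 * W) - 1 / β) 0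
    MonotoneOn ψ (Set.Ioi (0 : ℝ)) ∧
    (∀ β : ℝ, 0 < β → β ≤ 2 * Real.log 2 * W → ψ β = 0) ∧
    (∀ β : ℝ, 2 * Real.log 2 * W < β → 0 < ψ β) := by
  intro ψ
  have hl2 : (0:ℝ) < Real.log 2 := Real.log_pos (by norm_num)
  set c : ℝ := 2 * Real.log 2 * W with hc
  have hcpos : 0 < c := by positivity
  -- ψ vanishes for 0 < β ≤ c
  have hzero : ∀ β : ℝ, 0 < β → β ≤ c → ψ β = 0 := by
    intro β hβ hβc
    have h1 : Real.logb 2 (β / c) ≤ 0 := by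
      apply Real.logb_nonpos (by norm_num) (by positivity)
      rw [div_le_one hcpos]; exact hβc
    have h2 : 1 / c - 1 / β ≤ 0 := by
      have : 1 / c ≤ 1 / β := one_div_le_one_div_of_le hβ hβc
      linarith
    have h1' : (1 / (2 * W)) * Real.logb 2 (β / c) ≤ 0 :=
      mul_nonpos_of_nonneg_of_nonpos (by positivity) h1
    show max ((1 / (2 * W)) * Real.logb 2 (β / c)) 0 - max (1 / c - 1 / β) 0 = 0
    rw [max_eq_right h1', max_eq_right h2, sub_zero]
  -- closed form for β > c
  have hform : ∀ β : ℝ, c < β →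
      ψ β = Real.log (β / c) / c - (1 / c - 1 / β) := by
    intro β hβ
    have hβpos : 0 < β := lt_trans hcpos hβ
    have h1 : 0 ≤ Real.logb 2 (β / c) := by
      apply Real.logb_nonneg (by norm_num)
      rw [le_div_iff₀ hcpos]; linarith
    have h2 : 0 ≤ 1 / c - 1 / β := by
      have : 1 / β ≤ 1 / c := one_div_le_one_div_of_le hcpos (le_of_lt hβ)
      linarith
    show max ((1 / (2 * W)) * Real.logb 2 (β / c)) 0 - max (1 / c - 1 / β) 0 = _
    rw [max_eq_left (by positivity), max_eq_left h2, Real.logb,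
      Real.log_div (ne_of_gt hβpos) (ne_of_gt hcpos)]
    have hl2' : Real.log 2 ≠ 0 := ne_of_gt hl2
    field_simp
    ring
  -- positivity for β > c
  have hpos : ∀ β : ℝ, c < β → 0 < ψ β := by
    intro β hβ
    have hβpos : 0 < β := lt_trans hcpos hβ
    rw [hform β hβ]
    have hne : c / β ≠ 1 := by
      intro h
      rw [div_eq_one_iff_eq (ne_of_gt hβpos)] at h
      linarith
    have hkey : Real.log (c / β) < c / β - 1 :=
      Real.log_lt_sub_one_of_pos (by positivity) hne
    have hinv : Real.log (β / c) = - Real.log (c / β) := by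
      rw [Real.log_div (ne_of_gt hβpos) (ne_of_gt hcpos),
        Real.log_div (ne_of_gt hcpos) (ne_of_gt hβpos)]
      ring
    have hkey2 : 1 - c / β < Real.log (β / c) := by rw [hinv]; linarith
    have h3 : (1 - c / β) / c < Real.log (β / c) / c := by gcongr
    have h4 : (1 - c / β) / c = 1 / c - 1 / β := by
      field_simp
    linarith
  refine ⟨?_, hzero, hpos⟩
  -- monotonicity
  intro β1 hβ1 β2 hβ2 h12
  simp only [Set.mem_Ioi] at hβ1 hβ2
  by_cases h2c : β2 ≤ c
  · rw [hzero β1 hβ1 (le_trans h12 h2c), hzero β2 hβ2 h2c]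
  · push_neg at h2c
    by_cases h1c : β1 ≤ c
    · rw [hzero β1 hβ1 h1c]
      exact le_of_lt (hpos β2 h2c)
    · push_neg at h1c
      rw [hform β1 h1c, hform β2 (lt_of_lt_of_le h1c h12)]
      have hkey : Real.log (β1 / β2) ≤ β1 / β2 - 1 :=
        Real.log_le_sub_one_of_pos (by positivity)
      have hlogd : Real.log (β2 / c) - Real.log (β1 / c) = - Real.log (β1 / β2) := by
        rw [Real.log_div (ne_of_gt hβ2) (ne_of_gt hcpos),
          Real.log_div (ne_of_gt hβ1) (ne_of_gt hcpos),
          Real.log_div (ne_of_gt hβ1) (ne_of_gt hβ2)]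
        ring
      have hA : c * (1 / β1 - 1 / β2) ≤ β1 * (1 / β1 - 1 / β2) := by
        apply mul_le_mul_of_nonneg_right (le_of_lt h1c)
        have : 1 / β2 ≤ 1 / β1 := one_div_le_one_div_of_le hβ1 h12
        linarith
      have hB : β1 * (1 / β1 - 1 / β2) = 1 - β1 / β2 := by
        field_simp
      have hC : c * (1 / β1 - 1 / β2) ≤ Real.log (β2 / c) - Real.log (β1 / c) := by
        rw [hlogd]; nlinarith
      have hD : 1 / β1 - 1 / β2 ≤ (Real.log (β2 / c) - Real.log (β1 / c)) / c := by
        rw [le_div_iff₀ hcpos]; linarith [hC]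
      have : Real.log (β2 / c) / c - Real.log (β1 / c) / c
          = (Real.log (β2 / c) - Real.log (β1 / c)) / c := by ring
      linarith
end

section
/- Let W > 0, N₀ > 0, a ≥ 0, b > 0, c > 0, d > 0, μ > 0, λ > 0, and define F(P, Ξ) = (1/(2W))·log₂(1 + (a + b·Ξ)²·P/((c²·Ξ² + 1)·N₀)) − μ·P − λ·d²·Ξ²·P for P ≥ 0, Ξ ≥ 0, and β(Ξ) = (a + b·Ξ)² / ((μ + λ·d²·Ξ²)·(c²·Ξ² + 1)·N₀). If β(Ξ) ≤ 2(ln 2)·W for every Ξ ≥ 0, then F(P, Ξ) ≤ 0 for all P ≥ 0 and Ξ ≥ 0, and F(0, Ξ) = 0 for every Ξ ≥ 0; hence the supremum of F over P ≥ 0, Ξ ≥ 0 equals 0 and is attained at (P, Ξ) = (0, 0). -/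
/-- First case of Proposition 3.1: in the per-frequency Lagrangian subproblem (21),
if the quality measure `β(Ξ)` never exceeds the threshold `2 ln 2 · W` over `Ξ ≥ 0`,
then the objective `F(P,Ξ)` is nonpositive for all `P, Ξ ≥ 0` and vanishes whenever
`P = 0`; hence its supremum over `P ≥ 0, Ξ ≥ 0` equals `0` and is attained at
`(P,Ξ) = (0,0)`. -/
theorem zero_power_optimal_below_threshold
    (W N₀ a b c d μ lam : ℝ)
    (hW : 0 < W) (hN₀ : 0 < N₀) (ha : 0 ≤ a) (hb : 0 < b) (hc : 0 < c)
    (hd : 0 < d) (hμ : 0 < μ) (hlam : 0 < lam) :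
    let F : ℝ → ℝ → ℝ := fun P Ξ =>
      (1 / (2 * W)) * Real.logb 2 (1 + (a + b * Ξ) ^ 2 * P / ((c ^ 2 * Ξ ^ 2 + 1) * N₀))
        - μ * P - lam * d ^ 2 * Ξ ^ 2 * P
    let β : ℝ → ℝ := fun Ξ =>
      (a + b * Ξ) ^ 2 / ((μ + lam * d ^ 2 * Ξ ^ 2) * (c ^ 2 * Ξ ^ 2 + 1) * N₀)
    (∀ Ξ : ℝ, 0 ≤ Ξ → β Ξ ≤ 2 * Real.log 2 * W) →
      (∀ P Ξ : ℝ, 0 ≤ P → 0 ≤ Ξ → F P Ξ ≤ 0) ∧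
      (∀ Ξ : ℝ, 0 ≤ Ξ → F 0 Ξ = 0) ∧
      (∀ P Ξ : ℝ, 0 ≤ P → 0 ≤ Ξ → F P Ξ ≤ F 0 0) ∧ F 0 0 = 0 := by
  intro F β hβ
  have hlog2 : 0 < Real.log 2 := Real.log_pos (by norm_num)
  have hzero : ∀ Ξ : ℝ, 0 ≤ Ξ → F 0 Ξ = 0 := by
    intro Ξ _
    simp [F, Real.logb]
  have hmain : ∀ P Ξ : ℝ, 0 ≤ P → 0 ≤ Ξ → F P Ξ ≤ 0 := by
    intro P Ξ hP hΞ
    have hS : 0 < (c ^ 2 * Ξ ^ 2 + 1) * N₀ := by positivity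
    have hM : 0 < μ + lam * d ^ 2 * Ξ ^ 2 := by positivity
    set x : ℝ := (a + b * Ξ) ^ 2 * P / ((c ^ 2 * Ξ ^ 2 + 1) * N₀) with hx
    have hx0 : 0 ≤ x := by positivity
    have hlog : Real.log (1 + x) ≤ x := by
      have := Real.log_le_sub_one_of_pos (by linarith : (0:ℝ) < 1 + x)
      linarith
    -- from hβ: (a+bΞ)^2 ≤ 2 log2 W * (μ + lam d² Ξ²) * ((c²Ξ²+1) N₀)
    have hnum : (a + b * Ξ) ^ 2 ≤
        2 * Real.log 2 * W * ((μ + lam * d ^ 2 * Ξ ^ 2) * ((c ^ 2 * Ξ ^ 2 + 1) * N₀)) := by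
      have h := hβ Ξ hΞ
      rw [div_le_iff₀ (by positivity)] at h
      calc (a + b * Ξ) ^ 2
          ≤ 2 * Real.log 2 * W * ((μ + lam * d ^ 2 * Ξ ^ 2) * (c ^ 2 * Ξ ^ 2 + 1) * N₀) := h
        _ = 2 * Real.log 2 * W * ((μ + lam * d ^ 2 * Ξ ^ 2) * ((c ^ 2 * Ξ ^ 2 + 1) * N₀)) := by
            ring
    have hkey : x / (2 * W * Real.log 2) ≤ (μ + lam * d ^ 2 * Ξ ^ 2) * P := by
      rw [div_le_iff₀ (by positivity), hx, div_le_iff₀ hS]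
      calc (a + b * Ξ) ^ 2 * P
          ≤ (2 * Real.log 2 * W * ((μ + lam * d ^ 2 * Ξ ^ 2) * ((c ^ 2 * Ξ ^ 2 + 1) * N₀))) * P :=
            mul_le_mul_of_nonneg_right hnum hP
        _ = (μ + lam * d ^ 2 * Ξ ^ 2) * P * (2 * W * Real.log 2) * ((c ^ 2 * Ξ ^ 2 + 1) * N₀) := by
            ring
    have hF : F P Ξ = (1 / (2 * W)) * (Real.log (1 + x) / Real.log 2)
        - (μ + lam * d ^ 2 * Ξ ^ 2) * P := by
      simp only [F, Real.logb]
      ring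
    rw [hF]
    have h1 : (1 / (2 * W)) * (Real.log (1 + x) / Real.log 2)
        ≤ x / (2 * W * Real.log 2) := by
      have : (1 / (2 * W)) * (Real.log (1 + x) / Real.log 2)
          = Real.log (1 + x) / (2 * W * Real.log 2) := by
        field_simp
      rw [this]
      exact div_le_div_of_nonneg_right hlog (by positivity) |>.trans_eq rfl
    linarith
  refine ⟨hmain, hzero, ?_, hzero 0 le_rfl⟩
  intro P Ξ hP hΞ
  rw [hzero 0 le_rfl]
  exact hmain P Ξ hP hΞ
end

section
/- Let N₀ > 0, a ≥ 0, b > 0, c > 0, d > 0, μ > 0, λ > 0, and define β(Ξ) = (a + b·Ξ)² / ((μ + λ·d²·Ξ²)·(c²·Ξ² + 1)·N₀) for Ξ ≥ 0. Then β is quasi-concave on [0, ∞); i.e., for every t ∈ ℝ the superlevel set {Ξ ≥ 0 : β(Ξ) ≥ t} is convex (an interval). -/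
private lemma sqrt_convex_aux (A B C : ℝ) (hA : 0 < A) (hB : 0 < B) (hC : 0 < C) :
    ConvexOn ℝ (Set.Ici (0 : ℝ))
      (fun x => Real.sqrt (A * x ^ 4 + B * x ^ 2 + C)) := by
  have hg : ∀ x : ℝ, (0:ℝ) ≤ A * x ^ 4 + B * x ^ 2 + C := by
    intro x; positivity
  refine ⟨convex_Ici 0, ?_⟩
  intro x hx y hy θ τ hθ hτ hsum
  simp only [smul_eq_mul]
  have hx0 : (0:ℝ) ≤ x := hx
  have hy0 : (0:ℝ) ≤ y := hy
  have hK : (0:ℝ) ≤ A * (x*y)^2 + B * (x*y) + C := by positivity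
  have hCS : A * (x*y)^2 + B * (x*y) + C
      ≤ Real.sqrt ((A * x ^ 4 + B * x ^ 2 + C) * (A * y ^ 4 + B * y ^ 2 + C)) := by
    rw [Real.le_sqrt hK (by positivity)]
    nlinarith [mul_nonneg (mul_pos hA hB).le (sq_nonneg (x^2*y - x*y^2)),
      mul_nonneg (mul_pos hA hC).le (sq_nonneg (x^2 - y^2)),
      mul_nonneg (mul_pos hB hC).le (sq_nonneg (x - y))]
  have hrhs : (0:ℝ) ≤ θ * Real.sqrt (A * x ^ 4 + B * x ^ 2 + C)
      + τ * Real.sqrt (A * y ^ 4 + B * y ^ 2 + C) := by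
    have := Real.sqrt_nonneg (A * x ^ 4 + B * x ^ 2 + C)
    have := Real.sqrt_nonneg (A * y ^ 4 + B * y ^ 2 + C)
    positivity
  rw [← Real.sqrt_sq hrhs]
  apply Real.sqrt_le_sqrt
  have hsq : (θ * Real.sqrt (A * x ^ 4 + B * x ^ 2 + C)
        + τ * Real.sqrt (A * y ^ 4 + B * y ^ 2 + C)) ^ 2
      = θ^2 * (A * x ^ 4 + B * x ^ 2 + C) + τ^2 * (A * y ^ 4 + B * y ^ 2 + C)
        + 2*θ*τ*Real.sqrt ((A * x ^ 4 + B * x ^ 2 + C) * (A * y ^ 4 + B * y ^ 2 + C)) := by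
    have h1 : Real.sqrt (A * x ^ 4 + B * x ^ 2 + C) ^ 2 = A * x ^ 4 + B * x ^ 2 + C :=
      Real.sq_sqrt (hg x)
    have h2 : Real.sqrt (A * y ^ 4 + B * y ^ 2 + C) ^ 2 = A * y ^ 4 + B * y ^ 2 + C :=
      Real.sq_sqrt (hg y)
    have h3 : Real.sqrt (A * x ^ 4 + B * x ^ 2 + C) * Real.sqrt (A * y ^ 4 + B * y ^ 2 + C)
        = Real.sqrt ((A * x ^ 4 + B * x ^ 2 + C) * (A * y ^ 4 + B * y ^ 2 + C)) :=
      (Real.sqrt_mul (hg x) _).symm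
    linear_combination θ^2*h1 + τ^2*h2 + 2*θ*τ*h3
  rw [hsq]
  have key : A * (θ*x + τ*y) ^ 4 + B * (θ*x + τ*y) ^ 2 + C
      ≤ θ^2 * (A * x ^ 4 + B * x ^ 2 + C) + τ^2 * (A * y ^ 4 + B * y ^ 2 + C)
        + 2*θ*τ*(A * (x*y)^2 + B * (x*y) + C) := by
    have e1 : θ*x^2 + τ*y^2 - (θ*x + τ*y)^2 = θ*τ*(x-y)^2 := by
      linear_combination (-(θ*x^2 + τ*y^2)) * hsum
    have h1 : (θ*x + τ*y)^2 ≤ θ*x^2 + τ*y^2 := by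
      nlinarith [mul_nonneg (mul_nonneg hθ hτ) (sq_nonneg (x - y)), e1]
    have h2 : (0:ℝ) ≤ (θ*x + τ*y)^2 := sq_nonneg _
    have h3 : ((θ*x + τ*y)^2)^2 ≤ (θ*x^2 + τ*y^2)^2 := pow_le_pow_left₀ h2 h1 2
    have e2 : θ^2*(A*x^4+B*x^2+C) + τ^2*(A*y^4+B*y^2+C) + 2*θ*τ*(A*(x*y)^2+B*(x*y)+C)
        = A*(θ*x^2+τ*y^2)^2 + B*(θ*x+τ*y)^2 + C := by
      linear_combination C*(θ+τ+1)*hsum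
    nlinarith [mul_le_mul_of_nonneg_left h3 hA.le, e2]
  have h2θτ : (0:ℝ) ≤ 2*θ*τ := by positivity
  linarith [key, mul_le_mul_of_nonneg_left hCS h2θτ]

/-- Quasi-concavity claim of Section III-B: the quality measure
`β(Ξ) = (a + b·Ξ)² / ((μ + λ·d²·Ξ²)·(c²·Ξ² + 1)·N₀)` is quasi-concave on `[0,∞)`,
i.e. all of its superlevel sets within `[0,∞)` are convex. -/
theorem beta_quasiconcave
    (N₀ a b c d μ lam : ℝ)
    (hN₀ : 0 < N₀) (ha : 0 ≤ a) (hb : 0 < b) (hc : 0 < c)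
    (hd : 0 < d) (hμ : 0 < μ) (hlam : 0 < lam) :
    QuasiconcaveOn ℝ (Set.Ici (0 : ℝ)) (fun Ξ =>
      (a + b * Ξ) ^ 2 / ((μ + lam * d ^ 2 * Ξ ^ 2) * (c ^ 2 * Ξ ^ 2 + 1) * N₀)) := by
  intro t
  set A : ℝ := lam * d^2 * c^2 * N₀ with hA
  set B : ℝ := (lam * d^2 + μ * c^2) * N₀ with hB
  set C : ℝ := μ * N₀ with hC
  have hApos : 0 < A := by rw [hA]; positivity
  have hBpos : 0 < B := by rw [hB]; positivity
  have hCpos : 0 < C := by rw [hC]; positivity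
  have hgpos : ∀ x : ℝ, 0 < (μ + lam * d ^ 2 * x ^ 2) * (c ^ 2 * x ^ 2 + 1) * N₀ := by
    intro x; positivity
  have hgeq : ∀ x : ℝ, (μ + lam * d ^ 2 * x ^ 2) * (c ^ 2 * x ^ 2 + 1) * N₀
      = A * x ^ 4 + B * x ^ 2 + C := by
    intro x; rw [hA, hB, hC]; ring
  rcases le_or_gt t 0 with ht | ht
  · have : {x ∈ Set.Ici (0:ℝ) | t ≤ (a + b * x) ^ 2 /
        ((μ + lam * d ^ 2 * x ^ 2) * (c ^ 2 * x ^ 2 + 1) * N₀)} = Set.Ici 0 := by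
      ext x
      simp only [Set.mem_setOf_eq, Set.mem_Ici]
      refine ⟨fun h => h.1, fun h => ⟨h, le_trans ht (by positivity)⟩⟩
    rw [this]
    exact convex_Ici 0
  · set s := Real.sqrt t with hs
    have hspos : 0 < s := Real.sqrt_pos.mpr ht
    set F : ℝ → ℝ := fun x => (a + b * x) - s * Real.sqrt (A * x ^ 4 + B * x ^ 2 + C)
      with hF
    have hconc : ConcaveOn ℝ (Set.Ici (0:ℝ)) F := by
      have h1 : ConcaveOn ℝ (Set.Ici (0:ℝ)) (fun x : ℝ => a + b * x) := by
        refine ⟨convex_Ici 0, ?_⟩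
        intro x _ y _ θ τ hθ hτ hsum
        simp only [smul_eq_mul]
        nlinarith
      have h2 : ConvexOn ℝ (Set.Ici (0:ℝ))
          (fun x => s * Real.sqrt (A * x ^ 4 + B * x ^ 2 + C)) :=
        (sqrt_convex_aux A B C hApos hBpos hCpos).smul (le_of_lt hspos)
      exact h1.sub h2
    have hq := hconc.quasiconcaveOn 0
    have heq : {x ∈ Set.Ici (0:ℝ) | t ≤ (a + b * x) ^ 2 /
        ((μ + lam * d ^ 2 * x ^ 2) * (c ^ 2 * x ^ 2 + 1) * N₀)}
        = {x ∈ Set.Ici (0:ℝ) | 0 ≤ F x} := by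
      ext x
      simp only [Set.mem_setOf_eq, Set.mem_Ici]
      constructor
      · rintro ⟨hx, hle⟩
        refine ⟨hx, ?_⟩
        rw [le_div_iff₀ (hgpos x)] at hle
        rw [hgeq x] at hle
        have hnum : 0 ≤ a + b * x := by positivity
        have h1 : s * Real.sqrt (A * x ^ 4 + B * x ^ 2 + C)
            = Real.sqrt (t * (A * x ^ 4 + B * x ^ 2 + C)) := by
          rw [Real.sqrt_mul (le_of_lt ht)]
        have h2 : Real.sqrt (t * (A * x ^ 4 + B * x ^ 2 + C)) ≤ a + b * x := by
          rw [← Real.sqrt_sq hnum]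
          apply Real.sqrt_le_sqrt
          nlinarith
        simp only [hF]
        rw [h1]
        linarith
      · rintro ⟨hx, hle⟩
        refine ⟨hx, ?_⟩
        rw [le_div_iff₀ (hgpos x), hgeq x]
        have hgnn : (0:ℝ) ≤ A * x ^ 4 + B * x ^ 2 + C := by positivity
        have h1 : s * Real.sqrt (A * x ^ 4 + B * x ^ 2 + C)
            = Real.sqrt (t * (A * x ^ 4 + B * x ^ 2 + C)) := by
          rw [Real.sqrt_mul (le_of_lt ht)]
        have h2 : Real.sqrt (t * (A * x ^ 4 + B * x ^ 2 + C)) ≤ a + b * x := by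
          simp only [hF] at hle
          linarith [h1 ▸ hle]
        have h3 := Real.sqrt_nonneg (t * (A * x ^ 4 + B * x ^ 2 + C))
        have h4 : (Real.sqrt (t * (A * x ^ 4 + B * x ^ 2 + C)))^2
            = t * (A * x ^ 4 + B * x ^ 2 + C) := Real.sq_sqrt (by positivity)
        nlinarith
    rw [heq]
    exact hq
end

section
/- Let W > 0, N₀ > 0, a ≥ 0, b > 0, c > 0, d > 0, μ > 0, λ > 0. Define for P ≥ 0, Ξ ≥ 0: F(P, Ξ) = (1/(2W))·log₂(1 + (a + b·Ξ)²·P/((c²·Ξ² + 1)·N₀)) − μ·P − λ·d²·Ξ²·P, β(Ξ) = (a + b·Ξ)²/((μ + λ·d²·Ξ²)·(c²·Ξ² + 1)·N₀), and χ(Ξ) = max(1/(2(ln 2)·W·(μ + λ·d²·Ξ²)) − (c²·Ξ² + 1)·N₀/(a + b·Ξ)², 0) whenever a + b·Ξ > 0. Suppose Ξ* ≥ 0 satisfies β(Ξ*) = sup {β(Ξ) : Ξ ≥ 0} and β(Ξ*) > 2(ln 2)·W, and set P* = χ(Ξ*). Then (P*, Ξ*) is a global maximizer of F over {(P, Ξ)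 : P ≥ 0, Ξ ≥ 0}: F(P*, Ξ*) ≥ F(P, Ξ) for all P ≥ 0, Ξ ≥ 0. -/
private lemma log_le_log_add' (x y : ℝ) (hx : 0 < x) (hy : 0 < y) :
    Real.log x ≤ Real.log y + (x / y - 1) := by
  have h := Real.log_le_sub_one_of_pos (div_pos hx hy)
  rw [Real.log_div hx.ne' hy.ne'] at h
  linarith

private lemma waterfill_bound (k m s P : ℝ) (hk : 0 < k) (hm : 0 < m) (hs : 0 < s)
    (hP : 0 ≤ P) (hks : m < k * s) :
    k * Real.log (1 + s * P) - m * P ≤ k * Real.log (k * s / m) - k + m / s := by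
  have h1 : 0 < 1 + s * P := by positivity
  have h2 : 0 < k * s / m := by positivity
  have h := log_le_log_add' (1 + s * P) (k * s / m) h1 h2
  have h3 : k * Real.log (1 + s * P) ≤
      k * Real.log (k * s / m) + k * ((1 + s * P) / (k * s / m) - 1) := by
    nlinarith
  have h4 : k * ((1 + s * P) / (k * s / m) - 1) - m * P = m / s - k := by
    field_simp
    ring
  linarith

private lemma low_bound (k m s P : ℝ) (hk : 0 < k) (hs : 0 ≤ s) (hP : 0 ≤ P)
    (hks : k * s ≤ m) : k * Real.log (1 + s * P) - m * P ≤ 0 := by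
  have h1 : 0 < 1 + s * P := by positivity
  have h := Real.log_le_sub_one_of_pos h1
  nlinarith [mul_le_mul_of_nonneg_left h hk.le, mul_nonneg (sub_nonneg.2 hks) hP]

private lemma g_mono (k t₁ t₂ : ℝ) (hk : 0 < k) (h1 : 1 ≤ k * t₁) (ht : t₁ ≤ t₂) :
    k * Real.log (k * t₁) - k + 1 / t₁ ≤ k * Real.log (k * t₂) - k + 1 / t₂ := by
  have ht1 : 0 < t₁ := by nlinarith
  have ht2 : 0 < t₂ := lt_of_lt_of_le ht1 ht
  have h := log_le_log_add' (k * t₁) (k * t₂) (by positivity) (by positivity)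
  have h3 : k * Real.log (k * t₁) ≤
      k * Real.log (k * t₂) + k * ((k * t₁) / (k * t₂) - 1) := by
    nlinarith
  have key : 0 ≤ 1 / t₂ - (k * ((k * t₁) / (k * t₂) - 1) + 1 / t₁) := by
    have e : 1 / t₂ - (k * ((k * t₁) / (k * t₂) - 1) + 1 / t₁)
        = (t₂ - t₁) * (k * t₁ - 1) / (t₁ * t₂) := by
      field_simp
      ring
    rw [e]
    exact div_nonneg (mul_nonneg (by linarith) (by linarith)) (by positivity)
  linarith

private lemma main_aux (k ms ss m s P t : ℝ) (hk : 0 < k) (hms : 0 < ms) (hss : 0 < ss)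
    (hm : 0 < m) (hs : 0 ≤ s) (hP : 0 ≤ P) (ht : t = ss / ms) (hkt : 1 < k * t)
    (hle : s / m ≤ t) :
    k * Real.log (1 + s * P) - m * P ≤
      k * Real.log (1 + ss * (k / ms - 1 / ss)) - ms * (k / ms - 1 / ss) := by
  have ht0 : 0 < t := by rw [ht]; positivity
  have harg : 1 + ss * (k / ms - 1 / ss) = k * t := by
    rw [ht]; field_simp; ring
  have hmsP : ms * (k / ms - 1 / ss) = k - 1 / t := by
    rw [ht, one_div_div]; field_simp
  rw [harg, hmsP]
  have hrhs0 : k * Real.log (k * (1 / k)) - k + 1 / (1 / k) = 0 := by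
    rw [mul_one_div_cancel hk.ne', Real.log_one, one_div_one_div]; ring
  have h1k : 1 / k ≤ t := by rw [div_le_iff₀ hk]; nlinarith
  rcases le_or_gt (k * s) m with hcase | hcase
  · have h0 := low_bound k m s P hk hs hP hcase
    have h2 := g_mono k (1 / k) t hk (by rw [mul_one_div_cancel hk.ne']) h1k
    linarith
  · have hs' : 0 < s := by nlinarith
    have h1 := waterfill_bound k m s P hk hm hs' hP hcase
    have h2 := g_mono k (s / m) t hk
      (by rw [← mul_div_assoc, le_div_iff₀ hm, one_mul]; linarith) hle
    rw [one_div_div] at h2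
    rw [mul_div_assoc] at h1
    linarith

/-- Second (main) case of Proposition 3.1: if `Ξ*` maximizes the quality measure
`β` over `[0,∞)` and `β(Ξ*) > 2 ln 2 · W`, then the pair `(P*, Ξ*)` with
`P* = χ(Ξ*)` (water-filling power) is a global maximizer of the per-frequency
Lagrangian objective `F` over `{P ≥ 0, Ξ ≥ 0}`. -/
theorem lagrangian_subproblem_optimal_solution
    (W N₀ a b c d μ lam : ℝ)
    (hW : 0 < W) (hN₀ : 0 < N₀) (ha : 0 ≤ a) (hb : 0 < b) (hc : 0 < c)
    (hd : 0 < d) (hμ : 0 < μ) (hlam : 0 < lam) :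
    let F : ℝ → ℝ → ℝ := fun P Ξ =>
      (1 / (2 * W)) * Real.logb 2 (1 + (a + b * Ξ) ^ 2 * P / ((c ^ 2 * Ξ ^ 2 + 1) * N₀))
        - μ * P - lam * d ^ 2 * Ξ ^ 2 * P
    let β : ℝ → ℝ := fun Ξ =>
      (a + b * Ξ) ^ 2 / ((μ + lam * d ^ 2 * Ξ ^ 2) * (c ^ 2 * Ξ ^ 2 + 1) * N₀)
    let χ : ℝ → ℝ := fun Ξ =>
      max (1 / (2 * Real.log 2 * W * (μ + lam * d ^ 2 * Ξ ^ 2))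
        - (c ^ 2 * Ξ ^ 2 + 1) * N₀ / (a + b * Ξ) ^ 2) 0
    ∀ Ξs : ℝ, 0 ≤ Ξs → (∀ Ξ : ℝ, 0 ≤ Ξ → β Ξ ≤ β Ξs) →
      2 * Real.log 2 * W < β Ξs →
      ∀ P Ξ : ℝ, 0 ≤ P → 0 ≤ Ξ → F P Ξ ≤ F (χ Ξs) Ξs := by
  intro F β χ Ξs hΞs hmax hβs P Ξ hP hΞ
  have hL : 0 < Real.log 2 := Real.log_pos one_lt_two
  have hkpos : 0 < 1 / (2 * Real.log 2 * W) := by positivity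
  set k : ℝ := 1 / (2 * Real.log 2 * W) with hkdef
  have hFeq : ∀ P' Q : ℝ, F P' Q =
      k * Real.log (1 + (a + b * Q) ^ 2 / ((c ^ 2 * Q ^ 2 + 1) * N₀) * P')
        - (μ + lam * d ^ 2 * Q ^ 2) * P' := by
    intro P' Q
    have hD : (0:ℝ) < (c ^ 2 * Q ^ 2 + 1) * N₀ := by positivity
    show 1 / (2 * W) * Real.logb 2 (1 + (a + b * Q) ^ 2 * P' / ((c ^ 2 * Q ^ 2 + 1) * N₀))
        - μ * P' - lam * d ^ 2 * Q ^ 2 * P' = _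
    rw [← Real.log_div_log, hkdef,
      show (a + b * Q) ^ 2 * P' / ((c ^ 2 * Q ^ 2 + 1) * N₀)
        = (a + b * Q) ^ 2 / ((c ^ 2 * Q ^ 2 + 1) * N₀) * P' from by ring]
    field_simp
    ring
  have hms : (0:ℝ) < μ + lam * d ^ 2 * Ξs ^ 2 := by positivity
  have hDs : (0:ℝ) < (c ^ 2 * Ξs ^ 2 + 1) * N₀ := by positivity
  have h2LW : k * (2 * Real.log 2 * W) = 1 := by rw [hkdef]; field_simp
  have hkt : 1 < k * β Ξs := by
    have := mul_lt_mul_of_pos_left hβs hkpos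
    linarith
  have hβpos : 0 < β Ξs := by
    by_contra h
    push_neg at h
    nlinarith [mul_nonneg hkpos.le (neg_nonneg.mpr h)]
  have hns : 0 < (a + b * Ξs) ^ 2 := by
    rcases (sq_nonneg (a + b * Ξs)).lt_or_eq with h | h
    · exact h
    · exfalso
      have hz : β Ξs = 0 := by
        show (a + b * Ξs) ^ 2 / ((μ + lam * d ^ 2 * Ξs ^ 2) * (c ^ 2 * Ξs ^ 2 + 1) * N₀) = 0
        rw [← h]; simp
      linarith
  have hss : 0 < (a + b * Ξs) ^ 2 / ((c ^ 2 * Ξs ^ 2 + 1) * N₀) := div_pos hns hDs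
  have hβval : β Ξs = (a + b * Ξs) ^ 2 / ((c ^ 2 * Ξs ^ 2 + 1) * N₀)
      / (μ + lam * d ^ 2 * Ξs ^ 2) := by
    show (a + b * Ξs) ^ 2 / ((μ + lam * d ^ 2 * Ξs ^ 2) * (c ^ 2 * Ξs ^ 2 + 1) * N₀) = _
    rw [div_div]; ring_nf
  have hkn : ((c ^ 2 * Ξs ^ 2 + 1) * N₀) * (μ + lam * d ^ 2 * Ξs ^ 2)
      < k * (a + b * Ξs) ^ 2 := by
    rw [hβval, div_div, ← mul_div_assoc, lt_div_iff₀ (by positivity)] at hkt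
    linarith
  have hinner : 1 / (2 * Real.log 2 * W * (μ + lam * d ^ 2 * Ξs ^ 2))
      = k / (μ + lam * d ^ 2 * Ξs ^ 2) := by
    rw [hkdef, div_div]
  have hpos : 0 < k / (μ + lam * d ^ 2 * Ξs ^ 2)
      - ((c ^ 2 * Ξs ^ 2 + 1) * N₀) / (a + b * Ξs) ^ 2 := by
    rw [sub_pos, div_lt_div_iff₀ hns hms]
    linarith
  have hχ : χ Ξs = k / (μ + lam * d ^ 2 * Ξs ^ 2)
      - 1 / ((a + b * Ξs) ^ 2 / ((c ^ 2 * Ξs ^ 2 + 1) * N₀)) := by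
    show max (1 / (2 * Real.log 2 * W * (μ + lam * d ^ 2 * Ξs ^ 2))
        - (c ^ 2 * Ξs ^ 2 + 1) * N₀ / (a + b * Ξs) ^ 2) 0 = _
    rw [one_div_div, hinner]
    exact max_eq_left hpos.le
  rw [hFeq P Ξ, hFeq (χ Ξs) Ξs, hχ]
  have hm : (0:ℝ) < μ + lam * d ^ 2 * Ξ ^ 2 := by positivity
  have hsnn : (0:ℝ) ≤ (a + b * Ξ) ^ 2 / ((c ^ 2 * Ξ ^ 2 + 1) * N₀) := by positivity
  have hβΞ : β Ξ = (a + b * Ξ) ^ 2 / ((c ^ 2 * Ξ ^ 2 + 1) * N₀)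
      / (μ + lam * d ^ 2 * Ξ ^ 2) := by
    show (a + b * Ξ) ^ 2 / ((μ + lam * d ^ 2 * Ξ ^ 2) * (c ^ 2 * Ξ ^ 2 + 1) * N₀) = _
    rw [div_div]; ring_nf
  have hle : (a + b * Ξ) ^ 2 / ((c ^ 2 * Ξ ^ 2 + 1) * N₀) / (μ + lam * d ^ 2 * Ξ ^ 2)
      ≤ β Ξs := by
    rw [← hβΞ]; exact hmax Ξ hΞ
  exact main_aux k _ _ _ _ P (β Ξs) hkpos hms hss hm hsnn hP hβval hkt hle
end
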